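/- arXiv:2412.11269 — 5 statements merged into one kernel-verified Lean document; each statement's English description precedes it below -/
import Mathlib

section
/- For all nonnegative integers p and k, the sum over all (k+1)-tuples (p₀,…,p_k) of nonnegative integers with p₀+⋯+p_k = p of the product C_{p₀}·C_{p₁}·⋯·C_{p_k} equals ((k+1)/(2p+k+1))·binom(2p+k+1, p), where Cₙ is the n-th Catalan number. -/
/-!
The tuple sum is the coefficient of `X ^ p` in `C ^ (k + 1)`, where `C = ∑ Cₙ Xⁿ` is the Catalan
series. From `C = 1 + X C²` we get `C ^ (m + 1) = C ^ m + X C ^ (m + 2)`, a Pascal-type recurrence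
for the coefficients `[X ^ p] C ^ m`. The ballot numbers `m / (2p + m) * (2p + m).choose p` satisfy
the same recurrence and the same boundary values, so the two agree by induction on `p` and then `m`.
-/

open Finset PowerSeries

theorem PowerSeries.coeff_pow_eq_sum_antidiagonalTuple {R : Type*} [CommSemiring R]
    (φ : R⟦X⟧) (m p : ℕ) :
    coeff p (φ ^ m) = ∑ f ∈ Nat.antidiagonalTuple m p, ∏ i, coeff (f i) φ := by
  rw [← piAntidiag_univ_fin_eq_antidiagonalTuple, ← Fin.prod_const, coeff_prod,
    finsuppAntidiag, sum_map, ← sum_attach (piAntidiag _ _)]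
  rfl

theorem PowerSeries.catalanSeries_pow_succ (m : ℕ) :
    catalanSeries ^ (m + 1) = catalanSeries ^ m + X * catalanSeries ^ (m + 2) :=
  calc catalanSeries ^ (m + 1) = catalanSeries ^ m * (catalanSeries ^ 2 * X + 1) := by
        rw [pow_succ, catalanSeries_sq_mul_X_add_one]
    _ = catalanSeries ^ m + X * catalanSeries ^ (m + 2) := by ring

theorem PowerSeries.coeff_succ_catalanSeries_pow_succ (p m : ℕ) :
    coeff (p + 1) (catalanSeries ^ (m + 1))
      = coeff (p + 1) (catalanSeries ^ m) + coeff p (catalanSeries ^ (m + 2)) := by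
  rw [catalanSeries_pow_succ, map_add, coeff_succ_X_mul]

/-- At `p = m = 0` this is `0 / 0 = 0`, whereas `[X ^ 0] C ^ 0 = 1`. -/
def ballot (p m : ℕ) : ℚ := m / (2 * p + m) * (2 * p + m).choose p

theorem ballot_zero_left {m : ℕ} (hm : m ≠ 0) : ballot 0 m = 1 := by
  simp [ballot, hm]

@[simp] theorem ballot_zero_right (p : ℕ) : ballot p 0 = 0 := by
  simp [ballot]

theorem ballot_succ_succ (p m : ℕ) :
    ballot (p + 1) (m + 1) = ballot (p + 1) m + ballot p (m + 2) := by
  have pascal := Nat.choose_succ_succ (2 * p + m + 2) p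
  have ratio := Nat.choose_succ_right_eq (2 * p + m + 2) p
  rw [show 2 * p + m + 2 - p = p + m + 2 by omega] at ratio
  simp only [ballot, show 2 * (p + 1) + (m + 1) = 2 * p + m + 2 + 1 by omega,
    show 2 * (p + 1) + m = 2 * p + m + 2 by omega, show 2 * p + (m + 2) = 2 * p + m + 2 by omega,
    pascal]
  generalize (2 * p + m + 2).choose p = c, (2 * p + m + 2).choose (p + 1) = d at ratio ⊢
  have ratio : (d : ℚ) * (p + 1) = c * (p + m + 2) := by exact_mod_cast ratio
  push_cast
  field_simp
  linear_combination (2 * m + 4 * p + 4 : ℚ) * ratio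

theorem PowerSeries.coeff_catalanSeries_pow_succ (p m : ℕ) :
    ((coeff p (catalanSeries ^ (m + 1)) : ℕ) : ℚ) = ballot p (m + 1) := by
  induction p generalizing m with
  | zero => simp [coeff_zero_eq_constantCoeff, ballot_zero_left]
  | succ p ih =>
    suffices ∀ m, ((coeff (p + 1) (catalanSeries ^ m) : ℕ) : ℚ) = ballot (p + 1) m from
      this (m + 1)
    intro m
    induction m with
    | zero => simp [coeff_one]
    | succ m ihm =>
      rw [coeff_succ_catalanSeries_pow_succ, Nat.cast_add, ihm, ih, ballot_succ_succ]

theorem stmt_9 (p k : ℕ) :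
    ((∑ f ∈ Finset.Nat.antidiagonalTuple (k + 1) p, ∏ i, catalan (f i) : ℕ) : ℚ)
      = (k + 1) / (2 * p + k + 1) * Nat.choose (2 * p + k + 1) p := by
  simp only [← catalanSeries_coeff]
  rw [← coeff_pow_eq_sum_antidiagonalTuple, coeff_catalanSeries_pow_succ, ballot]
  push_cast [add_assoc]
  rfl
end

section
/- For all nonnegative integers p, k and any fixed index i with 0 ≤ i ≤ k, the sum over all (k+1)-tuples (p₀,…,p_k) of nonnegative integers with p₀+⋯+p_k = p of (p_i + 1)·C_{p₀}·C_{p₁}·⋯·C_{p_k} equals binom(2p+k, p). -/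
/-!
Since `(n + 1) * catalan n = centralBinom n`, the sum is the coefficient of `X ^ p` in
`B * C ^ k`, where `C = ∑ catalan n * X ^ n` and `B = ∑ centralBinom n * X ^ n`. Writing
`B_k = ∑ (2n + k).choose n * X ^ n`, Pascal's rule gives `B_(k+1) = B_k + X * B_(k+2)`, and together
with `C = 1 + X * C ^ 2` this yields `C * B_k = B_(k+1)` by induction on the coefficient index.
Hence `B * C ^ k = B_k`.
-/

open Finset PowerSeries

theorem PowerSeries.coeff_prod_fin {R : Type*} [CommSemiring R] {k : ℕ} (f : Fin k → R⟦X⟧)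
    (d : ℕ) :
    coeff d (∏ j, f j) = ∑ l ∈ Nat.antidiagonalTuple k d, ∏ j, coeff (l j) (f j) := by
  rw [coeff_prod, ← piAntidiag_univ_fin_eq_antidiagonalTuple, finsuppAntidiag, sum_map,
    ← sum_attach (piAntidiag univ d)]
  rfl

noncomputable def shiftedCentralBinomSeries (k : ℕ) : ℕ⟦X⟧ := mk fun n ↦ (2 * n + k).choose n

theorem shiftedCentralBinomSeries_succ (k : ℕ) :
    shiftedCentralBinomSeries (k + 1) =
      shiftedCentralBinomSeries k + X * shiftedCentralBinomSeries (k + 2) := by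
  ext (_ | n)
  · simp [shiftedCentralBinomSeries]
  · simp only [shiftedCentralBinomSeries, map_add, coeff_succ_X_mul, coeff_mk]
    rw [show 2 * (n + 1) + (k + 1) = (2 * n + k + 2) + 1 by ring, Nat.choose_succ_succ,
      show 2 * (n + 1) + k = 2 * n + k + 2 by ring, show 2 * n + (k + 2) = 2 * n + k + 2 by ring,
      add_comm]

theorem catalanSeries_mul_shiftedCentralBinomSeries (k : ℕ) :
    catalanSeries * shiftedCentralBinomSeries k = shiftedCentralBinomSeries (k + 1) := by
  ext p
  induction p using Nat.strong_induction_on generalizing k with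
  | _ p ih =>
    rcases p with _ | q
    · simp [coeff_mul, shiftedCentralBinomSeries]
    have hexpand : catalanSeries * shiftedCentralBinomSeries k = shiftedCentralBinomSeries k +
        X * (catalanSeries * (catalanSeries * shiftedCentralBinomSeries k)) := by
      conv_lhs => rw [← catalanSeries_sq_mul_X_add_one]
      ring
    have hinner : coeff q (catalanSeries * (catalanSeries * shiftedCentralBinomSeries k)) =
        coeff q (catalanSeries * shiftedCentralBinomSeries (k + 1)) := by
      rw [coeff_mul, coeff_mul]
      refine sum_congr rfl fun ab hab ↦ ?_
      rw [ih ab.2 (Nat.antidiagonal.snd_lt hab)]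
    rw [hexpand, shiftedCentralBinomSeries_succ k, map_add, map_add, coeff_succ_X_mul,
      coeff_succ_X_mul, hinner, ih q q.lt_succ_self]

theorem centralBinom_mul_catalanSeries_pow (k : ℕ) :
    mk Nat.centralBinom * catalanSeries ^ k = shiftedCentralBinomSeries k := by
  induction k with
  | zero => ext n; simp [shiftedCentralBinomSeries, Nat.centralBinom]
  | succ k ih =>
    rw [pow_succ', mul_left_comm, ih, catalanSeries_mul_shiftedCentralBinomSeries]

theorem succ_mul_prod_catalan_eq_prod_coeff {ι : Type*} [Fintype ι] [DecidableEq ι]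
    (f : ι → ℕ) (i : ι) :
    (f i + 1) * ∏ j, catalan (f j) =
      ∏ j, coeff (f j) (Function.update (fun _ ↦ catalanSeries) i (mk Nat.centralBinom) j) := by
  rw [Fintype.prod_eq_mul_prod_compl i, Fintype.prod_eq_mul_prod_compl i, ← mul_assoc,
    succ_mul_catalan_eq_centralBinom, Function.update_self, coeff_mk]
  congr 1
  refine prod_congr rfl fun j hj ↦ ?_
  rw [Function.update_of_ne (by simpa using hj), catalanSeries_coeff]

theorem stmt_10 (p k : ℕ) (i : Fin (k + 1)) :
    (∑ f ∈ Finset.Nat.antidiagonalTuple (k + 1) p, (f i + 1) * ∏ j, catalan (f j))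
      = Nat.choose (2 * p + k) p := by
  have hprod : ∏ j, Function.update (fun _ ↦ catalanSeries) i (mk Nat.centralBinom) j =
      mk Nat.centralBinom * catalanSeries ^ k := by
    simp [prod_update_of_mem, card_sdiff]
  simp_rw [succ_mul_prod_catalan_eq_prod_coeff _ i, ← coeff_prod_fin, hprod,
    centralBinom_mul_catalanSeries_pow, shiftedCentralBinomSeries, coeff_mk]
end

section
/- For every n ≥ 1, Σ_{m=1}^{n} (m·2^m/(2n-m))·binom(2n-m, n-m) = binom(2n, n). -/
/-!
The summand telescopes: with `g m = 2^m * C(2n - m, n)`, the ratio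
`C(2n - m - 1, n) / C(2n - m, n) = (n - m) / (2n - m)` turns the `m`-th summand into
`g m - g (m + 1)`. The sum is therefore `g 1 - g (n + 1) = 2 * C(2n - 1, n) = C(2n, n)`,
where `g (n + 1) = 2^(n+1) * C(n - 1, n) = 0`; this is why `g` uses `C(2n - m, n)` and not the
equal `C(2n - m, n - m)`, whose truncated subtraction would give `1` at `m = n + 1`.
-/

open Finset

theorem Nat.cast_choose_mul_succ_eq {R : Type*} [CommRing R] (N k : ℕ) :
    (N.choose k : R) * (N + 1) = (N + 1).choose k * (N + 1 - k) := by
  rcases le_or_gt k (N + 1) with hk | hk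
  · exact_mod_cast congrArg (Nat.cast : ℕ → R) (Nat.choose_mul_succ_eq N k)
  · simp [Nat.choose_eq_zero_of_lt hk, Nat.choose_eq_zero_of_lt (Nat.lt_of_succ_lt hk)]

theorem two_mul_choose_two_mul_sub_one {n : ℕ} (hn : 1 ≤ n) :
    2 * (2 * n - 1).choose n = (2 * n).choose n := by
  obtain ⟨k, rfl⟩ := Nat.exists_eq_add_of_le' hn
  rw [show 2 * (k + 1) - 1 = 2 * k + 1 by omega, show 2 * (k + 1) = 2 * k + 1 + 1 by ring,
    Nat.choose_succ_succ' (2 * k + 1) k, Nat.choose_symm_half, two_mul]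

theorem mul_two_pow_div_mul_choose_eq_sub {n m : ℕ} (hm : 1 ≤ m) (hmn : m ≤ n) :
    (m : ℚ) * 2 ^ m / (2 * n - m) * (2 * n - m).choose (n - m)
      = 2 ^ m * (2 * n - m).choose n - 2 ^ (m + 1) * (2 * n - (m + 1)).choose n := by
  obtain ⟨N, hN⟩ : ∃ N, 2 * n - m = N + 1 := ⟨2 * n - m - 1, by omega⟩
  have hNq : (2 * n - m : ℚ) = N + 1 := by
    rw [← Nat.cast_ofNat, ← Nat.cast_mul, ← Nat.cast_sub (by omega), hN]; push_cast; ring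
  rw [show 2 * n - (m + 1) = N by omega, hN, hNq,
    show n - m = N + 1 - n by omega, Nat.choose_symm (by omega)]
  have hpos : (N + 1 : ℚ) ≠ 0 := by positivity
  have hratio := Nat.cast_choose_mul_succ_eq (R := ℚ) N n
  field_simp
  linear_combination (2 : ℚ) ^ (m + 1) * hratio - 2 ^ m * ((N + 1).choose n : ℚ) * hNq

theorem stmt_12 (n : ℕ) (hn : 1 ≤ n) :
    (∑ m ∈ Finset.Icc 1 n,
        (m : ℚ) * 2 ^ m / (2 * n - m) * Nat.choose (2 * n - m) (n - m))
      = Nat.choose (2 * n) n := by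
  set g : ℕ → ℚ := fun m => 2 ^ m * (2 * n - m).choose n
  calc (∑ m ∈ Icc 1 n, (m : ℚ) * 2 ^ m / (2 * n - m) * (2 * n - m).choose (n - m))
      = ∑ m ∈ Icc 1 n, -(g (m + 1) - g m) := by
        refine sum_congr rfl fun m hm => ?_
        rw [neg_sub, mul_two_pow_div_mul_choose_eq_sub (mem_Icc.1 hm).1 (mem_Icc.1 hm).2]
    _ = g 1 - g (n + 1) := by rw [sum_neg_distrib, sum_Icc_sub hn, neg_sub]
    _ = (2 * n).choose n := by
        simp only [g, Nat.choose_eq_zero_of_lt (show 2 * n - (n + 1) < n by omega),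
          ← two_mul_choose_two_mul_sub_one hn]
        push_cast
        ring
end

section
/- For every n ≥ 1, Σ_{m=1}^{n} (m/(2n-m))·binom(2n-m, n-m) = Cₙ, the n-th Catalan number. -/
/-!
Writing `j = n - m`, the `m`-th term is `(n - j) / (n + j) * C(n + j, j)`, and since
`n / (n + j) * C(n + j, j) = C(n - 1 + j, j)` it equals `2 C(n - 1 + j, j) - C(n + j, j)`.
By the hockey-stick identity the two sums over `j < n` are `C(2n - 1, n) = C(2n, n) / 2` and
`C(2n, n + 1)`, and `C(2n, n) - C(2n, n + 1) = Cₙ`.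
-/

open Finset

theorem Finset.sum_Icc_one_eq_sum_range_sub {M : Type*} [AddCommMonoid M] (f : ℕ → M) (n : ℕ) :
    ∑ m ∈ Icc 1 n, f m = ∑ j ∈ range n, f (n - j) := by
  rw [range_eq_Ico, sum_Ico_reflect f 0 n.le_succ, Nat.add_sub_cancel_left, Nat.sub_zero,
    Ico_add_one_right_eq_Icc]

namespace Nat

theorem centralBinom_succ_eq_two_mul_choose (n : ℕ) :
    centralBinom (n + 1) = 2 * (2 * n + 1).choose (n + 1) := by
  rw [centralBinom, show 2 * (n + 1) = 2 * n + 1 + 1 by ring, choose_succ_succ, choose_symm_half]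
  ring

theorem catalan_add_choose_succ_eq_centralBinom (n : ℕ) :
    catalan n + (2 * n).choose (n + 1) = centralBinom n := by
  have h := choose_succ_right_eq (2 * n) n
  rw [show 2 * n - n = n by omega, ← centralBinom] at h
  apply Nat.eq_of_mul_eq_mul_left (by omega : 0 < n + 1)
  rw [mul_add, succ_mul_catalan_eq_centralBinom, mul_comm _ ((2 * n).choose _), h]
  ring

end Nat

theorem div_mul_choose_eq_two_mul_choose_sub_choose (k j : ℕ) :
    (k + 1 - j : ℚ) / (k + 1 + j) * (k + 1 + j).choose j
      = 2 * (k + j).choose j - (k + 1 + j).choose j := by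
  have h := (k + j).choose_mul_succ_eq j
  rw [show k + j + 1 - j = k + 1 by omega] at h
  qify at h
  rw [show k + 1 + j = k + j + 1 by ring]
  field_simp
  linear_combination (-2) * h

theorem Nat.sum_range_add_choose' (n k : ℕ) :
    ∑ j ∈ range (n + 1), (k + j).choose j = (n + k + 1).choose (k + 1) := by
  rw [← Nat.sum_range_add_choose]
  exact sum_congr rfl fun j _ => by rw [add_comm, Nat.choose_symm_add]

theorem stmt_13 (n : ℕ) (hn : 1 ≤ n) :
    (∑ m ∈ Finset.Icc 1 n, (m : ℚ) / (2 * n - m) * Nat.choose (2 * n - m) (n - m))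
      = catalan n := by
  obtain ⟨k, rfl⟩ : ∃ k, n = k + 1 := ⟨n - 1, by omega⟩
  rw [sum_Icc_one_eq_sum_range_sub]
  calc _ = ∑ j ∈ range (k + 1), (2 * (k + j).choose j - (k + 1 + j).choose j : ℚ) := by
        refine sum_congr rfl fun j hj => ?_
        have hj : j ≤ k := Nat.lt_succ_iff.mp (mem_range.mp hj)
        rw [← div_mul_choose_eq_two_mul_choose_sub_choose,
          show 2 * (k + 1) - (k + 1 - j) = k + 1 + j by omega,
          show k + 1 - (k + 1 - j) = j by omega, Nat.cast_sub (by omega)]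
        push_cast
        ring
    _ = 2 * (2 * k + 1).choose (k + 1) - (2 * (k + 1)).choose (k + 1 + 1) := by
        rw [sum_sub_distrib, ← mul_sum]
        simp only [← Nat.cast_sum, Nat.sum_range_add_choose']
        ring_nf
    _ = catalan (k + 1) := by
        have h := (Nat.catalan_add_choose_succ_eq_centralBinom (k + 1)).trans
          (Nat.centralBinom_succ_eq_two_mul_choose k)
        qify at h
        linarith
end

section
/- Let ω₁, ω₂ > 0 and 0 < |z| < √ω₂. Define μ_z on ℕ by μ_z({0}) = ω₁(ω₂-|z|²)/(ω₁ω₂-(ω₁-ω₂)|z|²) and μ_z({n}) = μ_z({0})·(|z|²/ω₁)·(|z|²/ω₂)^{n-1} for n ≥ 1. Then μ_z is a probability measure on ℕ, and its Fourier transform Σ_{n≥0} e^{itn}·μ_z({n}) equals (ω₁(ω₂-|z|²)/(ω₁ω₂-(ω₁-ω₂)|z|²))·(1 + |z|²e^{it}/(ω₁(1 - (|z|²/ω₂)e^{it}))). -/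
/-!
Away from `0`, `μ` is a geometric sequence of ratio `q = |z|² / ω₂ < 1`, and so is `n ↦ e^{itn} μ n`,
with ratio `q e^{it}`. Both the total mass and the Fourier transform are therefore the value at `0`
plus a geometric series; the normalizing constant is exactly the inverse of the resulting mass.
-/

open Complex

theorem hasSum_of_geometric_tail {K : Type*} [NormedField K] [CompleteSpace K]
    {f : ℕ → K} {c a q : K} (hq : ‖q‖ < 1) (h0 : f 0 = c)
    (hsucc : ∀ n, f (n + 1) = c * a * q ^ n) :
    HasSum f (c * (1 + a / (1 - q))) := by
  have htail : HasSum (fun n ↦ f (n + 1)) (c * a * (1 - q)⁻¹) := by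
    simpa only [hsucc] using (hasSum_geometric_of_norm_lt_one hq).mul_left (c * a)
  have h := (hasSum_nat_add_iff 1).mp htail
  rw [Finset.sum_range_one, h0] at h
  rwa [show c * (1 + a / (1 - q)) = c * a * (1 - q)⁻¹ + c by ring]

theorem hasSum_fourier_of_geometric_tail {f : ℕ → ℝ} {c a q : ℝ} (hq : |q| < 1)
    (h0 : f 0 = c) (hsucc : ∀ n, f (n + 1) = c * a * q ^ n) (t : ℝ) :
    HasSum (fun n : ℕ ↦ exp (I * t * n) * (f n : ℂ))
      (c * (1 + a * exp (I * t) / (1 - q * exp (I * t)))) := by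
  have hqe : ‖(q : ℂ) * exp (I * t)‖ < 1 := by
    rwa [norm_mul, mul_comm I, norm_exp_ofReal_mul_I, mul_one, norm_real, Real.norm_eq_abs]
  refine hasSum_of_geometric_tail hqe (by simp [h0]) fun n ↦ ?_
  rw [hsucc, Nat.cast_succ, mul_add_one, Complex.exp_add, mul_comm _ (n : ℂ), Complex.exp_nat_mul]
  push_cast
  ring_nf

theorem stmt_17_general (ω₁ ω₂ : ℝ) (hω₁ : 0 < ω₁) (hω₂ : 0 < ω₂) (z : ℂ)
    (hz : ‖z‖ < Real.sqrt ω₂) (μ : ℕ → ℝ)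
    (hμ0 : μ 0 = ω₁ * (ω₂ - (‖z‖) ^ 2)
        / (ω₁ * ω₂ - (ω₁ - ω₂) * (‖z‖) ^ 2))
    (hμn : ∀ n : ℕ, 1 ≤ n →
      μ n = ω₁ * (ω₂ - (‖z‖) ^ 2)
          / (ω₁ * ω₂ - (ω₁ - ω₂) * (‖z‖) ^ 2)
          * ((‖z‖) ^ 2 / ω₁) * ((‖z‖) ^ 2 / ω₂) ^ (n - 1)) :
    (∀ n, 0 ≤ μ n) ∧ HasSum μ 1 ∧
    ∀ t : ℝ, (∑' n : ℕ, Complex.exp (I * t * n) * (μ n : ℂ))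
      = ((ω₁ * (ω₂ - (‖z‖) ^ 2)
            / (ω₁ * ω₂ - (ω₁ - ω₂) * (‖z‖) ^ 2) : ℝ) : ℂ)
        * (1 + ((‖z‖ : ℂ) ^ 2 * Complex.exp (I * t))
            / ((ω₁ : ℂ) * (1 - (((‖z‖) ^ 2 / ω₂ : ℝ) : ℂ) * Complex.exp (I * t)))) := by
  set r : ℝ := ‖z‖ ^ 2
  set c : ℝ := ω₁ * (ω₂ - r) / (ω₁ * ω₂ - (ω₁ - ω₂) * r)
  have hr : 0 ≤ r := by positivity
  have hrω₂ : r < ω₂ := by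
    simpa only [r, Real.sq_sqrt hω₂.le] using pow_lt_pow_left₀ hz (norm_nonneg z) two_ne_zero
  have hD : 0 < ω₁ * ω₂ - (ω₁ - ω₂) * r := by nlinarith
  have hc : 0 ≤ c := div_nonneg (mul_nonneg hω₁.le (by linarith)) hD.le
  have hq : |r / ω₂| < 1 := by
    rwa [abs_of_nonneg (by positivity), div_lt_one hω₂]
  have hsucc (n : ℕ) : μ (n + 1) = c * (r / ω₁) * (r / ω₂) ^ n := by
    simpa using hμn (n + 1) (Nat.le_add_left 1 n)
  refine ⟨fun n ↦ ?_, ?_, fun t ↦ ?_⟩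
  · cases n with
    | zero => exact hμ0 ▸ hc
    | succ n => rw [hsucc]; positivity
  · have hnorm : c * (1 + r / ω₁ / (1 - r / ω₂)) = 1 := by
      have hω₂r : ω₂ - r ≠ 0 := by linarith
      rw [div_mul_eq_mul_div, div_eq_one_iff_eq hD.ne']
      field_simp
      ring
    exact hnorm ▸ hasSum_of_geometric_tail hq hμ0 hsucc
  · have ha : ((r / ω₁ : ℝ) : ℂ) * exp (I * t) = (‖z‖ : ℂ) ^ 2 * exp (I * t) / ω₁ := by
      push_cast [r]
      ring
    rw [(hasSum_fourier_of_geometric_tail hq hμ0 hsucc t).tsum_eq, ha, div_div]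

theorem stmt_17 (ω₁ ω₂ : ℝ) (hω₁ : 0 < ω₁) (hω₂ : 0 < ω₂) (z : ℂ)
    (hz0 : z ≠ 0) (hz : ‖z‖ < Real.sqrt ω₂) (μ : ℕ → ℝ)
    (hμ0 : μ 0 = ω₁ * (ω₂ - (‖z‖) ^ 2)
        / (ω₁ * ω₂ - (ω₁ - ω₂) * (‖z‖) ^ 2))
    (hμn : ∀ n : ℕ, 1 ≤ n →
      μ n = ω₁ * (ω₂ - (‖z‖) ^ 2)
          / (ω₁ * ω₂ - (ω₁ - ω₂) * (‖z‖) ^ 2)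
          * ((‖z‖) ^ 2 / ω₁) * ((‖z‖) ^ 2 / ω₂) ^ (n - 1)) :
    (∀ n, 0 ≤ μ n) ∧ HasSum μ 1 ∧
    ∀ t : ℝ, (∑' n : ℕ, Complex.exp (I * t * n) * (μ n : ℂ))
      = ((ω₁ * (ω₂ - (‖z‖) ^ 2)
            / (ω₁ * ω₂ - (ω₁ - ω₂) * (‖z‖) ^ 2) : ℝ) : ℂ)
        * (1 + ((‖z‖ : ℂ) ^ 2 * Complex.exp (I * t))
            / ((ω₁ : ℂ) * (1 - (((‖z‖) ^ 2 / ω₂ : ℝ) : ℂ) * Complex.exp (I * t)))) :=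
  stmt_17_general ω₁ ω₂ hω₁ hω₂ z hz μ hμ0 hμn
end
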